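/- arXiv:2102.06751 — 3 statements merged into one kernel-verified Lean document; each statement's English description precedes it below -/
import Mathlib

section
/- Let β ≥ 0 and ν ≥ 0. For every complex λ with Re(λ) > −1, the integration-by-parts identity λ·G_{β,ν+1}(λ) = (ν+1)·G_{β,ν}(λ) − G_{β,ν+β+1}(λ) holds. -/
/-!
Differentiate `f(z) = z^{ν+1} exp(−z^{β+1}/(β+1)) e^{−λz}`: the product rule gives
`f' = (ν+1)·g_ν − g_{ν+β+1} − λ·g_{ν+1}`, where `g_μ` is the integrand of `G_{β,μ}(λ)`.
Since `f(0) = 0` and `f(z) → 0` as `z → ∞`, the integral of `f'` over `(0, ∞)` vanishes.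
All integrals converge because `z^{β+1}/(β+1) ≥ z − 1` (Bernoulli), so every integrand is
dominated by `e · z^μ e^{−(1 + Re λ) z}`.
-/

/-- The characteristic function `G_{β,μ}(λ) = ∫₀^∞ z^μ exp(−z^{β+1}/(β+1)) e^{−λz} dz`
of the linearized Becker–Döring bubblelator limit model. -/
noncomputable def G (β μ : ℝ) (l : ℂ) : ℂ :=
  ∫ z in Set.Ioi (0 : ℝ),
    ((z ^ μ * Real.exp (-z ^ (β + 1) / (β + 1)) : ℝ) : ℂ) * Complex.exp (-l * (z : ℂ))

open MeasureTheory Set Filter Topology Real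

noncomputable def Gkernel (β μ : ℝ) (l : ℂ) (z : ℝ) : ℂ :=
  ((z ^ μ * exp (-z ^ (β + 1) / (β + 1)) : ℝ) : ℂ) * Complex.exp (-l * (z : ℂ))

lemma G_eq_integral_Gkernel (β μ : ℝ) (l : ℂ) :
    G β μ l = ∫ z in Ioi (0 : ℝ), Gkernel β μ l z := rfl

lemma sub_one_le_rpow_add_one_div {β z : ℝ} (hβ : 0 ≤ β) (hz : 0 ≤ z) :
    z - 1 ≤ z ^ (β + 1) / (β + 1) := by
  have bernoulli : 1 + (β + 1) * (z - 1) ≤ z ^ (β + 1) := by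
    simpa using one_add_mul_self_le_rpow_one_add (by linarith : (-1 : ℝ) ≤ z - 1)
      (by linarith : (1 : ℝ) ≤ β + 1)
  rw [le_div_iff₀ (by linarith)]
  nlinarith

section Gkernel

variable {β μ : ℝ} {l : ℂ}

lemma norm_Gkernel_le (hβ : 0 ≤ β) {z : ℝ} (hz : 0 ≤ z) :
    ‖Gkernel β μ l z‖ ≤ exp 1 * (z ^ μ * exp (-(1 + l.re) * z)) := by
  have hexp : exp (-z ^ (β + 1) / (β + 1)) ≤ exp (1 - z) := by
    rw [exp_le_exp, neg_div]
    linarith [sub_one_le_rpow_add_one_div hβ hz]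
  have hre : (-l * (z : ℂ)).re = -l.re * z := by simp
  rw [Gkernel, norm_mul, Complex.norm_real, norm_of_nonneg (by positivity), Complex.norm_exp, hre]
  calc z ^ μ * exp (-z ^ (β + 1) / (β + 1)) * exp (-l.re * z)
      ≤ z ^ μ * exp (1 - z) * exp (-l.re * z) := by gcongr
    _ = exp 1 * (z ^ μ * exp (-(1 + l.re) * z)) := by
      rw [mul_assoc, ← exp_add, show 1 - z + -l.re * z = 1 + -(1 + l.re) * z by ring, exp_add]
      ring

lemma continuousAt_Gkernel {z : ℝ} (hμ : z ≠ 0 ∨ 0 ≤ μ) (hβ : z ≠ 0 ∨ 0 ≤ β + 1) :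
    ContinuousAt (Gkernel β μ l) z := by
  have hpow := continuousAt_rpow_const z μ hμ
  have hweight := (continuousAt_rpow_const z (β + 1) hβ).neg.div_const (β + 1)
  exact (Complex.continuous_ofReal.continuousAt.comp (hpow.mul hweight.rexp)).mul
    (Complex.continuous_exp.comp (continuous_const.mul Complex.continuous_ofReal)).continuousAt

lemma integrableOn_Gkernel (hβ : 0 ≤ β) (hμ : -1 < μ) (hl : -1 < l.re) :
    IntegrableOn (Gkernel β μ l) (Ioi 0) := by
  have hdom : IntegrableOn (fun z : ℝ => exp 1 * (z ^ μ * exp (-(1 + l.re) * z ^ (1 : ℝ))))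
      (Ioi 0) :=
    (integrableOn_rpow_mul_exp_neg_mul_rpow hμ one_pos (by linarith)).const_mul _
  simp only [rpow_one] at hdom
  have hcont : ContinuousOn (Gkernel β μ l) (Ioi 0) := fun z hz =>
    (continuousAt_Gkernel (Or.inl (ne_of_gt hz)) (Or.inl (ne_of_gt hz))).continuousWithinAt
  refine hdom.mono' (hcont.aestronglyMeasurable measurableSet_Ioi) ?_
  filter_upwards [ae_restrict_mem measurableSet_Ioi] with z hz
  exact norm_Gkernel_le hβ (le_of_lt hz)

lemma tendsto_Gkernel_atTop (hβ : 0 ≤ β) (hl : -1 < l.re) :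
    Tendsto (Gkernel β μ l) atTop (𝓝 0) := by
  have hdom := (tendsto_rpow_mul_exp_neg_mul_atTop_nhds_zero μ (1 + l.re) (by linarith)).const_mul
    (exp 1)
  rw [mul_zero] at hdom
  refine squeeze_zero_norm' ?_ hdom
  filter_upwards [eventually_ge_atTop 0] with z hz
  exact norm_Gkernel_le hβ hz

lemma Gkernel_zero (hμ : μ ≠ 0) : Gkernel β μ l 0 = 0 := by
  simp [Gkernel, zero_rpow hμ]

lemma hasDerivAt_Gkernel (hβ : β + 1 ≠ 0) {z : ℝ} (hz : 0 < z) :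
    HasDerivAt (Gkernel β (μ + 1) l)
      ((μ + 1) * Gkernel β μ l z - Gkernel β (μ + β + 1) l z - l * Gkernel β (μ + 1) l z) z := by
  have hpow : HasDerivAt (fun y : ℝ => y ^ (μ + 1)) ((μ + 1) * z ^ μ) z := by
    simpa using hasDerivAt_rpow_const (p := μ + 1) (Or.inl hz.ne')
  have hexponent : HasDerivAt (fun y : ℝ => -y ^ (β + 1) / (β + 1)) (-z ^ β) z := by
    refine ((hasDerivAt_rpow_const (p := β + 1) (Or.inl hz.ne')).neg.div_const _).congr_deriv ?_
    field_simp
    simp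
  have hosc : HasDerivAt (fun y : ℝ => Complex.exp (-l * (y : ℂ)))
      (Complex.exp (-l * (z : ℂ)) * (-l * 1)) z :=
    ((hasDerivAt_id z).ofReal_comp.const_mul (-l)).cexp
  refine ((hpow.mul hexponent.exp).ofReal_comp.mul hosc).congr_deriv ?_
  have hsplit : z ^ (μ + β + 1) = z ^ μ * z ^ β * z := by
    rw [← rpow_add hz, ← rpow_add_one hz.ne']
  simp only [Gkernel, Pi.mul_apply, hsplit, rpow_add_one hz.ne' μ]
  push_cast
  ring

end Gkernel

/-- Integration by parts identity:
`λ·G_{β,ν+1}(λ) = (ν+1)·G_{β,ν}(λ) − G_{β,ν+β+1}(λ)` for `Re λ > −1`. -/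
theorem stmt7 (β ν : ℝ) (hβ : 0 ≤ β) (hν : 0 ≤ ν) (l : ℂ) (hl : -1 < l.re) :
    l * G β (ν + 1) l = ((ν : ℂ) + 1) * G β ν l - G β (ν + β + 1) l := by
  have hint : ∀ μ, -1 < μ → IntegrableOn (Gkernel β μ l) (Ioi 0) := fun μ hμ =>
    integrableOn_Gkernel hβ hμ hl
  have hA := (hint ν (by linarith)).const_mul ((ν : ℂ) + 1)
  have hB := hint (ν + β + 1) (by linarith)
  have hAB : IntegrableOn (fun z => ((ν : ℂ) + 1) * Gkernel β ν l z - Gkernel β (ν + β + 1) l z)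
      (Ioi 0) := hA.sub hB
  have hC := (hint (ν + 1) (by linarith)).const_mul l
  have hparts := integral_Ioi_of_hasDerivAt_of_tendsto
    (continuousAt_Gkernel (μ := ν + 1) (l := l) (Or.inr (by linarith)) (Or.inr (by linarith))
      ).continuousWithinAt
    (fun z hz => hasDerivAt_Gkernel (by linarith) hz) (hAB.sub hC)
    (tendsto_Gkernel_atTop hβ hl)
  rw [Gkernel_zero (by linarith), sub_zero, integral_sub hAB hC, integral_sub hA hB,
    integral_const_mul, integral_const_mul] at hparts
  simp only [G_eq_integral_Gkernel]
  linear_combination -hparts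
end

section
/- Let β ≥ 0, ν ≥ 0, ϑ₀ > 0, t₀ > 0, and δ > 0. Suppose λ : (ϑ₀−δ, ϑ₀+δ) → ℂ is a differentiable function with λ(ϑ₀) = i t₀, Re λ(ϑ) > −1 for all ϑ in the interval, satisfying ϑ·λ(ϑ) + G_{β,ν}(λ(ϑ)) = 0 for all ϑ in the interval, and assume D := ϑ₀ − G_{β,ν+1}(i t₀) ≠ 0. Then Re λ'(ϑ₀) = t₀ · φ'(t₀) / |D|², where φ(t) := Re G_{β,ν}(it). In particular, the sign of Re(dλ/dϑ) at the eigenvalue crossing equals the sign of (d/dt) Re G_{β,ν}(it) at t = t₀. -/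
/-!
Differentiating `ϑ λ(ϑ) + G_{β,ν}(λ(ϑ)) = 0` at `ϑ₀` and using `G_{β,ν}' = −G_{β,ν+1}` gives
`λ'(ϑ₀) D = −i t₀`, hence `Re λ'(ϑ₀) = Re (−i t₀ conj D) / |D|² = t₀ Im G_{β,ν+1}(i t₀) / |D|²`.
By the chain rule `φ'(t₀) = Re (i G_{β,ν}'(i t₀))` is the same imaginary part.
-/
open MeasureTheory Set Filter Topology Complex

noncomputable def weight (β μ z : ℝ) : ℝ := z ^ μ * Real.exp (-z ^ (β + 1) / (β + 1))

lemma weight_nonneg (β μ : ℝ) {z : ℝ} (hz : 0 ≤ z) : 0 ≤ weight β μ z := by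
  unfold weight; positivity

lemma weight_add_one (β μ : ℝ) {z : ℝ} (hz : 0 < z) :
    weight β (μ + 1) z = z * weight β μ z := by
  rw [weight, weight, Real.rpow_add_one hz.ne']; ring

@[fun_prop]
lemma measurable_weight (β μ : ℝ) : Measurable (weight β μ) := by
  unfold weight; fun_prop

lemma sub_one_le_rpow_div {p z : ℝ} (hp : 1 ≤ p) (hz : 0 ≤ z) : z - 1 ≤ z ^ p / p := by
  have bernoulli : 1 + p * (z - 1) ≤ z ^ p := by
    simpa using one_add_mul_self_le_rpow_one_add (by linarith : (-1 : ℝ) ≤ z - 1) hp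
  rw [le_div_iff₀ (by linarith)]
  nlinarith

lemma weight_le {β : ℝ} (hβ : 0 ≤ β) (μ : ℝ) {z : ℝ} (hz : 0 ≤ z) :
    weight β μ z ≤ Real.exp 1 * (z ^ μ * Real.exp (-z)) := by
  have hexp : Real.exp (-z ^ (β + 1) / (β + 1)) ≤ Real.exp (1 + -z) := by
    rw [Real.exp_le_exp, neg_div]
    linarith [sub_one_le_rpow_div (by linarith : (1 : ℝ) ≤ β + 1) hz]
  calc weight β μ z ≤ z ^ μ * Real.exp (1 + -z) := mul_le_mul_of_nonneg_left hexp (by positivity)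
    _ = _ := by rw [Real.exp_add]; ring

lemma integrableOn_weight_mul_exp {β μ r : ℝ} (hβ : 0 ≤ β) (hμ : -1 < μ) (hr : r < 1) :
    IntegrableOn (fun z => weight β μ z * Real.exp (r * z)) (Ioi 0) := by
  have hgamma : IntegrableOn (fun z : ℝ => z ^ μ * Real.exp (-(1 - r) * z)) (Ioi 0) := by
    simpa using integrableOn_rpow_mul_exp_neg_mul_rpow (p := 1) hμ one_pos (by linarith : 0 < 1 - r)
  refine (hgamma.const_mul (Real.exp 1)).mono'
    ((measurable_weight β μ).mul (by fun_prop)).aestronglyMeasurable ?_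
  filter_upwards [ae_restrict_mem measurableSet_Ioi] with z hz
  have hz0 : (0 : ℝ) ≤ z := le_of_lt hz
  rw [Real.norm_of_nonneg (mul_nonneg (weight_nonneg β μ hz0) (Real.exp_nonneg _))]
  calc weight β μ z * Real.exp (r * z)
      ≤ Real.exp 1 * (z ^ μ * Real.exp (-z)) * Real.exp (r * z) := by
        gcongr; exact weight_le hβ μ hz0
    _ = Real.exp 1 * (z ^ μ * Real.exp (-(1 - r) * z)) := by
        rw [show -(1 - r) * z = -z + r * z by ring, Real.exp_add]; ring

lemma norm_weight_mul_cexp (β μ : ℝ) {z : ℝ} (hz : 0 ≤ z) (x : ℂ) :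
    ‖(weight β μ z : ℂ) * cexp (-x * z)‖ = weight β μ z * Real.exp (-x.re * z) := by
  rw [norm_mul, norm_real, Real.norm_of_nonneg (weight_nonneg β μ hz), norm_exp]
  simp

lemma integrableOn_weight_mul_cexp {β μ : ℝ} (hβ : 0 ≤ β) (hμ : -1 < μ) {x : ℂ}
    (hx : -1 < x.re) :
    IntegrableOn (fun z : ℝ => (weight β μ z : ℂ) * cexp (-x * z)) (Ioi 0) := by
  refine (integrableOn_weight_mul_exp hβ hμ (by linarith : -x.re < 1)).mono'
    (by fun_prop) ?_
  filter_upwards [ae_restrict_mem measurableSet_Ioi] with z hz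
  rw [norm_weight_mul_cexp β μ (le_of_lt hz), neg_mul]

theorem hasDerivAt_G {β μ : ℝ} (hβ : 0 ≤ β) (hμ : -1 < μ) {l : ℂ} (hl : -1 < l.re) :
    HasDerivAt (G β μ) (-G β (μ + 1) l) l := by
  obtain ⟨ε, hε, hc⟩ : ∃ ε > 0, ε - l.re < 1 := ⟨(1 + l.re) / 2, by linarith, by linarith⟩
  set F : ℂ → ℝ → ℂ := fun x z => (weight β μ z : ℂ) * cexp (-x * z)
  set F' : ℂ → ℝ → ℂ := fun x z => -((weight β (μ + 1) z : ℂ) * cexp (-x * z))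
  have hre_ball : ∀ x ∈ Metric.ball l ε, -x.re < ε - l.re := fun x hx => by
    have := (abs_lt.1 ((abs_re_le_norm (x - l)).trans_lt (mem_ball_iff_norm.1 hx))).1
    simp only [sub_re] at this
    linarith
  have hdom : ∀ᵐ z ∂volume.restrict (Ioi 0), ∀ x ∈ Metric.ball l ε,
      ‖F' x z‖ ≤ weight β (μ + 1) z * Real.exp ((ε - l.re) * z) := by
    filter_upwards [ae_restrict_mem measurableSet_Ioi] with z (hz : 0 < z) x hx
    rw [norm_neg, norm_weight_mul_cexp β _ hz.le]
    gcongr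
    · exact weight_nonneg β _ hz.le
    · exact (hre_ball x hx).le
  have hderiv : ∀ᵐ z ∂volume.restrict (Ioi 0), ∀ x ∈ Metric.ball l ε,
      HasDerivAt (fun x => F x z) (F' x z) x := by
    filter_upwards [ae_restrict_mem measurableSet_Ioi] with z (hz : 0 < z) x _
    have hexp : HasDerivAt (fun x : ℂ => cexp (-x * z)) (cexp (-x * z) * (-1 * z)) x :=
      ((hasDerivAt_id x).neg.mul_const (z : ℂ)).cexp
    refine (hexp.const_mul (weight β μ z : ℂ)).congr_deriv ?_
    simp only [F', weight_add_one β μ hz]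
    push_cast
    ring
  have key := hasDerivAt_integral_of_dominated_loc_of_deriv_le (F := F) (F' := F')
    (Metric.ball_mem_nhds l hε) (.of_forall fun x => by dsimp only [F]; fun_prop)
    (integrableOn_weight_mul_cexp hβ hμ hl) (by dsimp only [F']; fun_prop) hdom
    (integrableOn_weight_mul_exp hβ (by linarith) hc) hderiv
  have hG := key.2
  rw [integral_neg] at hG
  exact hG

lemma mul_add_deriv_eq_neg_of_eventually_root {g : ℂ → ℂ} {g' L : ℂ} {lam : ℝ → ℂ} {ϑ₀ : ℝ}
    (hlam : HasDerivAt lam L ϑ₀) (hg : HasDerivAt g g' (lam ϑ₀))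
    (hroot : ∀ᶠ ϑ : ℝ in 𝓝 ϑ₀, (ϑ : ℂ) * lam ϑ + g (lam ϑ) = 0) :
    L * (ϑ₀ + g') = -lam ϑ₀ := by
  have hdiff : HasDerivAt (fun ϑ : ℝ => (ϑ : ℂ) * lam ϑ + g (lam ϑ))
      (1 * lam ϑ₀ + ϑ₀ * L + L • g') ϑ₀ :=
    ((hasDerivAt_id ϑ₀).ofReal_comp.mul hlam).add (hg.scomp_of_eq ϑ₀ hlam rfl)
  have hzero : HasDerivAt (fun ϑ : ℝ => (ϑ : ℂ) * lam ϑ + g (lam ϑ)) 0 ϑ₀ :=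
    (hasDerivAt_const ϑ₀ (0 : ℂ)).congr_of_eventuallyEq hroot
  have := hdiff.unique hzero
  rw [smul_eq_mul] at this
  linear_combination this

lemma hasDerivAt_re_comp_I_mul {g : ℂ → ℂ} {g' : ℂ} {t : ℝ} (hg : HasDerivAt g g' (I * t)) :
    HasDerivAt (fun t : ℝ => (g (I * t)).re) (-g'.im) t := by
  have hline : HasDerivAt (fun w : ℂ => g (I * w)) (I * g') t :=
    (hg.comp (t : ℂ) ((hasDerivAt_id (t : ℂ)).const_mul I)).congr_deriv (by ring)
  simpa using hline.real_of_complex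

lemma re_eq_of_mul_eq_neg_I_mul {L D : ℂ} {t : ℝ} (hD : D ≠ 0) (h : L * D = -(I * t)) :
    L.re = t * -D.im / ‖D‖ ^ 2 := by
  rw [eq_div_of_mul_eq hD h, div_re, Complex.sq_norm]
  simp

theorem stmt10_general (β ν ϑ₀ t₀ δ : ℝ) (hβ : 0 ≤ β) (hν : 0 ≤ ν)
    (hδ : 0 < δ) (lam : ℝ → ℂ)
    (hdiff : ∀ ϑ ∈ Set.Ioo (ϑ₀ - δ) (ϑ₀ + δ), DifferentiableAt ℝ lam ϑ)
    (hval : lam ϑ₀ = Complex.I * (t₀ : ℂ))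
    (heq : ∀ ϑ ∈ Set.Ioo (ϑ₀ - δ) (ϑ₀ + δ), (ϑ : ℂ) * lam ϑ + G β ν (lam ϑ) = 0)
    (hD : (ϑ₀ : ℂ) - G β (ν + 1) (Complex.I * (t₀ : ℂ)) ≠ 0) :
    (deriv lam ϑ₀).re =
      t₀ * deriv (fun t : ℝ => (G β ν (Complex.I * (t : ℂ))).re) t₀ /
        ‖(ϑ₀ : ℂ) - G β (ν + 1) (Complex.I * (t₀ : ℂ))‖ ^ 2 := by
  have hmem : ϑ₀ ∈ Ioo (ϑ₀ - δ) (ϑ₀ + δ) := ⟨by linarith, by linarith⟩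
  have hG : HasDerivAt (G β ν) (-G β (ν + 1) (I * t₀)) (I * t₀) :=
    hasDerivAt_G hβ (by linarith) (by simp)
  have hbranch := mul_add_deriv_eq_neg_of_eventually_root (hdiff ϑ₀ hmem).hasDerivAt
    (hval ▸ hG) (eventually_of_mem (Ioo_mem_nhds hmem.1 hmem.2) heq)
  rw [hval, ← sub_eq_add_neg] at hbranch
  rw [(hasDerivAt_re_comp_I_mul hG).deriv, re_eq_of_mul_eq_neg_I_mul hD hbranch]
  simp

/-- Along a differentiable eigenvalue branch `λ(ϑ)` with `λ(ϑ₀) = it₀`,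
`Re λ'(ϑ₀) = t₀ φ'(t₀)/|D|²` where `φ(t) = Re G_{β,ν}(it)` and
`D = ϑ₀ − G_{β,ν+1}(it₀)`. -/
theorem stmt10 (β ν ϑ₀ t₀ δ : ℝ) (hβ : 0 ≤ β) (hν : 0 ≤ ν) (hϑ₀ : 0 < ϑ₀)
    (ht₀ : 0 < t₀) (hδ : 0 < δ) (lam : ℝ → ℂ)
    (hdiff : ∀ ϑ ∈ Set.Ioo (ϑ₀ - δ) (ϑ₀ + δ), DifferentiableAt ℝ lam ϑ)
    (hval : lam ϑ₀ = Complex.I * (t₀ : ℂ))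
    (hre : ∀ ϑ ∈ Set.Ioo (ϑ₀ - δ) (ϑ₀ + δ), -1 < (lam ϑ).re)
    (heq : ∀ ϑ ∈ Set.Ioo (ϑ₀ - δ) (ϑ₀ + δ), (ϑ : ℂ) * lam ϑ + G β ν (lam ϑ) = 0)
    (hD : (ϑ₀ : ℂ) - G β (ν + 1) (Complex.I * (t₀ : ℂ)) ≠ 0) :
    (deriv lam ϑ₀).re =
      t₀ * deriv (fun t : ℝ => (G β ν (Complex.I * (t : ℂ))).re) t₀ /
        ‖(ϑ₀ : ℂ) - G β (ν + 1) (Complex.I * (t₀ : ℂ))‖ ^ 2 :=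
  stmt10_general β ν ϑ₀ t₀ δ hβ hν hδ lam hdiff hval heq hD
end

section
/- Let β > 1. Then there exists t > 0 such that Re G_{β,0}(it) = ∫₀^∞ exp(−y^{β+1}/(β+1))·cos(t y) dy = 0. (Indeed, since for exponent β+1 > 2 the function y ↦ exp(−|y|^{β+1}/(β+1)) is not positive definite, its cosine transform must take a negative value; since it is continuous and positive at t = 0, it has a zero.) -/
open Real MeasureTheory Set Filter Topology

theorem integral_exp_neg_mul_sq_mul_cos {a : ℝ} (ha : 0 < a) (b : ℝ) :
    ∫ x, exp (-a * x ^ 2) * cos (b * x) = √(π / a) * exp (-b ^ 2 / (4 * a)) := by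
  have ha' : 0 < (a : ℂ).re := by simpa using ha
  have hint : Integrable fun x : ℝ =>
      Complex.exp (Complex.I * b * x) * Complex.exp (-a * x ^ 2) := by
    simpa [← Complex.exp_add, add_comm, mul_comm]
      using integrable_cexp_quadratic ha' (Complex.I * b) 0
  have h := congrArg Complex.re (fourierIntegral_gaussian ha' b)
  rw [← RCLike.re_to_complex, ← integral_re hint] at h
  convert h using 1
  · congr 1 with x
    rw [← Complex.exp_add, RCLike.re_to_complex, Complex.exp_re]
    simp [mul_comm, ← Complex.ofReal_pow]
  · have hc : ((π : ℂ) / a) ^ (1 / 2 : ℂ) * Complex.exp (-b ^ 2 / (4 * a))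
        = ((√(π / a) * exp (-b ^ 2 / (4 * a)) : ℝ) : ℂ) := by
      rw [sqrt_eq_rpow, Complex.ofReal_mul, Complex.ofReal_cpow (by positivity)]
      push_cast
      rfl
    rw [hc, Complex.ofReal_re]

lemma norm_mul_cos_le (x θ : ℝ) : ‖x * cos θ‖ ≤ ‖x‖ := by
  rw [norm_mul]
  exact mul_le_of_le_one_right (norm_nonneg x) (abs_cos_le_one θ)

lemma integrable_exp_neg_mul_sq_mul_cos {a : ℝ} (ha : 0 < a) (b : ℝ) :
    Integrable fun x => exp (-a * x ^ 2) * cos (b * x) :=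
  (integrable_exp_neg_mul_sq ha).mono (by fun_prop) (ae_of_all _ fun _ => norm_mul_cos_le _ _)

lemma three_sub_four_mul_cos_add_cos_two_mul (θ : ℝ) :
    3 - 4 * cos θ + cos (2 * θ) = 2 * (1 - cos θ) ^ 2 := by
  rw [cos_two_mul]
  ring

noncomputable def cosTransform (φ : ℝ → ℝ) (t : ℝ) : ℝ := ∫ y, φ y * cos (t * y)

section CosTransform

variable {φ g : ℝ → ℝ} {C : ℝ}

lemma cosTransform_neg (φ : ℝ → ℝ) (t : ℝ) : cosTransform φ (-t) = cosTransform φ t := by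
  simp [cosTransform]

lemma cosTransform_zero (φ : ℝ → ℝ) : cosTransform φ 0 = ∫ y, φ y := by
  simp [cosTransform]

lemma integrable_mul_cos (hφ : Integrable φ) (t : ℝ) : Integrable fun y => φ y * cos (t * y) :=
  hφ.mono (hφ.1.mul (by fun_prop)) (ae_of_all _ fun _ => norm_mul_cos_le _ _)

lemma norm_cosTransform_le (hφ : Integrable φ) (t : ℝ) : ‖cosTransform φ t‖ ≤ ∫ y, ‖φ y‖ :=
  norm_integral_le_of_norm_le hφ.norm (ae_of_all _ fun _ => norm_mul_cos_le _ _)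

lemma continuous_cosTransform (hφ : Integrable φ) : Continuous (cosTransform φ) :=
  continuous_of_dominated (fun t => (integrable_mul_cos hφ t).1)
    (fun _ => ae_of_all _ fun _ => norm_mul_cos_le _ _) hφ.norm (ae_of_all _ fun _ => by fun_prop)

lemma integrable_cosTransform_mul (hφ : Integrable φ) (hg : Integrable g) :
    Integrable fun t => cosTransform φ t * g t :=
  hg.bdd_mul (continuous_cosTransform hφ).aestronglyMeasurable
    (ae_of_all _ (norm_cosTransform_le hφ))

lemma integral_cosTransform_mul (hφ : Integrable φ) (hg : Integrable g) :
    ∫ t, cosTransform φ t * g t = ∫ y, φ y * cosTransform g y := by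
  have hprod : Integrable (Function.uncurry fun t y => φ y * cos (t * y) * g t)
      (volume.prod volume) := by
    refine (hg.norm.mul_prod hφ.norm).mono ?_ (ae_of_all _ fun z => ?_)
    · exact (hφ.1.comp_snd.mul (by fun_prop)).mul hg.1.comp_fst
    · simp only [Function.uncurry, norm_mul (φ z.2 * _), norm_mul ‖g z.1‖, norm_norm]
      rw [mul_comm ‖g z.1‖]
      exact mul_le_mul_of_nonneg_right (norm_mul_cos_le _ _) (norm_nonneg _)
  simp only [cosTransform, ← integral_mul_const, ← integral_const_mul]
  rw [integral_integral_swap hprod]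
  congr 1 with y
  congr 1 with t
  ring_nf

lemma cosTransform_exp_neg_mul_sq_mul_cos {ε : ℝ} (hε : 0 < ε) (c y : ℝ) :
    cosTransform (fun t => exp (-ε ^ 2 * t ^ 2) * cos (c * t)) y
      = √π / (2 * ε) * (exp (-(y - c) ^ 2 / (4 * ε ^ 2)) + exp (-(y + c) ^ 2 / (4 * ε ^ 2))) := by
  have hε2 : 0 < ε ^ 2 := by positivity
  have hsum : ∀ t, exp (-ε ^ 2 * t ^ 2) * cos (c * t) * cos (y * t)
      = (exp (-ε ^ 2 * t ^ 2) * cos ((y - c) * t)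
        + exp (-ε ^ 2 * t ^ 2) * cos ((y + c) * t)) / 2 := by
    intro t
    rw [sub_mul, add_mul, cos_sub, cos_add]
    ring
  simp only [cosTransform, hsum]
  rw [integral_div, integral_add (integrable_exp_neg_mul_sq_mul_cos hε2 _)
    (integrable_exp_neg_mul_sq_mul_cos hε2 _), integral_exp_neg_mul_sq_mul_cos hε2,
    integral_exp_neg_mul_sq_mul_cos hε2, sqrt_div' _ hε2.le, sqrt_sq hε.le]
  ring

noncomputable def gaussianSmoothing (ε : ℝ) (φ : ℝ → ℝ) (c : ℝ) : ℝ :=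
  (2 * ε * √π)⁻¹ * ∫ y, φ y * exp (-(y - c) ^ 2 / (4 * ε ^ 2))

lemma gaussianSmoothing_eq_integral_comp {ε : ℝ} (hε : 0 < ε) (φ : ℝ → ℝ) (c : ℝ) :
    gaussianSmoothing ε φ c = (√π)⁻¹ * ∫ u, φ (c + 2 * ε * u) * exp (-u ^ 2) := by
  set ψ := fun y => φ y * exp (-(y - c) ^ 2 / (4 * ε ^ 2))
  have hψ : ∀ u, ψ (c + 2 * ε * u) = φ (c + 2 * ε * u) * exp (-u ^ 2) := by
    intro u
    simp only [ψ]
    congr 2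
    field_simp
    ring
  simp_rw [← hψ]
  rw [gaussianSmoothing, Measure.integral_comp_mul_left (fun x => ψ (c + x)) (2 * ε),
    integral_add_left_eq_self ψ c, smul_eq_mul, abs_of_pos (by positivity), mul_inv,
    mul_comm (2 * ε)⁻¹, mul_assoc]

lemma tendsto_gaussianSmoothing (hmeas : Measurable φ) (hbdd : ∀ y, ‖φ y‖ ≤ C) {c : ℝ}
    (hc : ContinuousAt φ c) : Tendsto (fun ε => gaussianSmoothing ε φ c) (𝓝[>] 0) (𝓝 (φ c)) := by
  have hgauss : Integrable fun u : ℝ => exp (-u ^ 2) := by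
    simpa using integrable_exp_neg_mul_sq one_pos
  have hlim : Tendsto (fun ε => ∫ u, φ (c + 2 * ε * u) * exp (-u ^ 2)) (𝓝[>] 0)
      (𝓝 (∫ u, φ c * exp (-u ^ 2))) := by
    refine tendsto_integral_filter_of_dominated_convergence (fun u => C * exp (-u ^ 2))
      (Eventually.of_forall fun ε => ?_) (Eventually.of_forall fun ε => ae_of_all _ fun u => ?_)
      (hgauss.const_mul C) (ae_of_all _ fun u => ?_)
    · exact ((hmeas.comp (by fun_prop)).mul (by fun_prop)).aestronglyMeasurable
    · rw [norm_mul, norm_of_nonneg (exp_pos _).le]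
      exact mul_le_mul_of_nonneg_right (hbdd _) (exp_pos _).le
    · have haffine : Tendsto (fun ε : ℝ => c + 2 * ε * u) (𝓝[>] 0) (𝓝 c) := by
        have : Continuous fun ε : ℝ => c + 2 * ε * u := by fun_prop
        simpa using (this.tendsto 0).mono_left nhdsWithin_le_nhds
      exact (hc.tendsto.comp haffine).mul_const _
  have hval : (√π)⁻¹ * ∫ u, φ c * exp (-u ^ 2) = φ c := by
    have := integral_gaussian 1
    simp only [neg_mul, one_mul, div_one] at this
    rw [integral_const_mul, this, mul_left_comm, inv_mul_cancel₀ (sqrt_pos.2 pi_pos).ne', mul_one]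
  rw [← hval]
  exact (hlim.const_mul _).congr' (eventually_nhdsWithin_of_forall fun ε hε =>
    (gaussianSmoothing_eq_integral_comp hε φ c).symm)

lemma integrable_mul_gaussianKernel (hφ : Integrable φ) (ε c : ℝ) :
    Integrable fun y => φ y * exp (-(y - c) ^ 2 / (4 * ε ^ 2)) :=
  hφ.mul_bdd (by fun_prop) (ae_of_all _ fun y => by
    rw [norm_of_nonneg (exp_pos _).le, exp_le_one_iff]
    exact div_nonpos_of_nonpos_of_nonneg (neg_nonpos.2 (sq_nonneg _)) (by positivity))

lemma integral_cosTransform_mul_exp_neg_mul_sq_mul_cos (hφ : Integrable φ) {ε : ℝ} (hε : 0 < ε)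
    (c : ℝ) : ∫ t, cosTransform φ t * (exp (-ε ^ 2 * t ^ 2) * cos (c * t))
      = π * (gaussianSmoothing ε φ c + gaussianSmoothing ε φ (-c)) := by
  rw [integral_cosTransform_mul hφ (integrable_exp_neg_mul_sq_mul_cos (by positivity) c)]
  simp only [cosTransform_exp_neg_mul_sq_mul_cos hε, gaussianSmoothing, sub_neg_eq_add]
  have hplus : Integrable fun y => φ y * exp (-(y + c) ^ 2 / (4 * ε ^ 2)) := by
    simpa using integrable_mul_gaussianKernel hφ ε (-c)
  rw [← mul_add, ← integral_add (integrable_mul_gaussianKernel hφ ε c) hplus,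
    ← integral_const_mul, ← integral_const_mul]
  congr 1 with y
  field_simp
  rw [sq_sqrt pi_pos.le]

theorem three_mul_sub_four_mul_add_nonneg_of_cosTransform_nonneg (hcont : Continuous φ)
    (hint : Integrable φ) (hbdd : ∀ y, ‖φ y‖ ≤ C) (heven : ∀ y, φ (-y) = φ y)
    (hΦ : ∀ t, 0 ≤ cosTransform φ t) (s : ℝ) :
    0 ≤ 3 * φ 0 - 4 * φ s + φ (2 * s) := by
  set I := fun c ε => ∫ t, cosTransform φ t * (exp (-ε ^ 2 * t ^ 2) * cos (c * t))
  have hlim (c : ℝ) : Tendsto (I c) (𝓝[>] 0) (𝓝 (2 * π * φ c)) := by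
    have h := ((tendsto_gaussianSmoothing hcont.measurable hbdd hcont.continuousAt (c := c)).add
      (tendsto_gaussianSmoothing hcont.measurable hbdd hcont.continuousAt (c := -c))).const_mul π
    rw [heven, ← two_mul, ← mul_assoc, mul_comm π] at h
    exact h.congr' (eventually_nhdsWithin_of_forall fun ε hε =>
      (integral_cosTransform_mul_exp_neg_mul_sq_mul_cos hint hε c).symm)
  have hnonneg : ∀ ε > 0, 0 ≤ 3 * I 0 ε - 4 * I s ε + I (2 * s) ε := by
    intro ε hε
    set k := fun c t => cosTransform φ t * (exp (-ε ^ 2 * t ^ 2) * cos (c * t))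
    have hk (c : ℝ) : Integrable (k c) :=
      integrable_cosTransform_mul hint (integrable_exp_neg_mul_sq_mul_cos (pow_pos hε 2) c)
    have hweight (t : ℝ) : 0 ≤ 3 * k 0 t - 4 * k s t + k (2 * s) t := by
      have hk_comb : 3 * k 0 t - 4 * k s t + k (2 * s) t = cosTransform φ t
          * (exp (-ε ^ 2 * t ^ 2) * (3 - 4 * cos (s * t) + cos (2 * (s * t)))) := by
        simp only [k, zero_mul, cos_zero, mul_assoc]
        ring
      rw [hk_comb, three_sub_four_mul_cos_add_cos_two_mul]
      exact mul_nonneg (hΦ t) (by positivity)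
    calc 0 ≤ ∫ t, (3 * k 0 t - 4 * k s t + k (2 * s) t) := integral_nonneg hweight
      _ = 3 * I 0 ε - 4 * I s ε + I (2 * s) ε := by
        rw [integral_add _ (hk _), integral_sub ((hk 0).const_mul 3) ((hk s).const_mul 4),
          integral_const_mul, integral_const_mul]
        exact ((hk 0).const_mul 3).sub ((hk s).const_mul 4)
  have h := ge_of_tendsto ((((hlim 0).const_mul 3).sub ((hlim s).const_mul 4)).add (hlim (2 * s)))
    (eventually_nhdsWithin_of_forall hnonneg)
  exact (mul_nonneg_iff_of_pos_left (by positivity : (0 : ℝ) < 2 * π)).1 (by linarith)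

theorem exists_pos_cosTransform_eq_zero (hcont : Continuous φ) (hint : Integrable φ)
    (hbdd : ∀ y, ‖φ y‖ ≤ C) (heven : ∀ y, φ (-y) = φ y)
    (hpos : 0 < ∫ y, φ y) {s : ℝ} (hs : 3 * φ 0 - 4 * φ s + φ (2 * s) < 0) :
    ∃ t > 0, cosTransform φ t = 0 := by
  by_contra! hne
  have hnonneg_of_nonneg : ∀ t ≥ 0, 0 ≤ cosTransform φ t := by
    intro t ht
    by_contra! hneg
    have h0 : 0 < cosTransform φ 0 := by rwa [cosTransform_zero]
    obtain ⟨c, hc, hc0⟩ := intermediate_value_Icc' ht (continuous_cosTransform hint).continuousOn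
      ⟨hneg.le, h0.le⟩
    rcases hc.1.eq_or_lt with rfl | hc_pos
    · exact h0.ne' hc0
    · exact hne c hc_pos hc0
  have hnonneg (t : ℝ) : 0 ≤ cosTransform φ t := by
    rcases le_total 0 t with ht | ht
    · exact hnonneg_of_nonneg t ht
    · simpa [cosTransform_neg] using hnonneg_of_nonneg (-t) (neg_nonneg.2 ht)
  linarith [three_mul_sub_four_mul_add_nonneg_of_cosTransform_nonneg hcont hint hbdd heven
    hnonneg s]

end CosTransform

noncomputable def genGaussian (p y : ℝ) : ℝ := exp (-|y| ^ p / p)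

section GenGaussian

variable {p : ℝ}

lemma genGaussian_of_nonneg (p : ℝ) {y : ℝ} (hy : 0 ≤ y) : genGaussian p y = exp (-y ^ p / p) := by
  rw [genGaussian, abs_of_nonneg hy]

lemma genGaussian_neg (p y : ℝ) : genGaussian p (-y) = genGaussian p y := by
  rw [genGaussian, abs_neg, genGaussian]

lemma genGaussian_zero (hp : 0 < p) : genGaussian p 0 = 1 := by
  rw [genGaussian, abs_zero, zero_rpow hp.ne', neg_zero, zero_div, exp_zero]

lemma continuous_genGaussian (hp : 0 < p) : Continuous (genGaussian p) := by
  unfold genGaussian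
  have := continuous_abs.rpow_const (p := p) fun _ => Or.inr hp.le
  fun_prop

lemma norm_genGaussian_le_one (hp : 0 < p) (y : ℝ) : ‖genGaussian p y‖ ≤ 1 := by
  rw [genGaussian, norm_of_nonneg (exp_pos _).le, exp_le_one_iff, neg_div]
  exact neg_nonpos.2 (div_nonneg (by positivity) hp.le)

lemma integral_genGaussian (hp : 0 < p) :
    ∫ y, genGaussian p y = 2 * (p⁻¹ ^ (-1 / p) * Gamma (1 / p + 1)) := by
  rw [← integral_exp_neg_mul_rpow hp (inv_pos.2 hp), ← integral_comp_abs]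
  congr 1 with y
  rw [genGaussian, neg_div, div_eq_inv_mul, neg_mul]

lemma integral_genGaussian_pos (hp : 0 < p) : 0 < ∫ y, genGaussian p y := by
  rw [integral_genGaussian hp]
  have := Gamma_pos_of_pos (by positivity : 0 < 1 / p + 1)
  positivity

lemma integrable_genGaussian (hp : 0 < p) : Integrable (genGaussian p) :=
  .of_integral_ne_zero (integral_genGaussian_pos hp).ne'

lemma cosTransform_genGaussian (p t : ℝ) :
    cosTransform (genGaussian p) t = 2 * ∫ y in Ioi 0, exp (-y ^ p / p) * cos (t * y) := by
  rw [cosTransform, ← integral_comp_abs (f := fun y => exp (-y ^ p / p) * cos (t * y))]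
  congr 1 with y
  rw [genGaussian]
  rcases abs_choice y with h | h <;> simp [h]

end GenGaussian

lemma exists_three_sub_four_mul_exp_add_exp_neg {q : ℝ} (hq : 4 < q) :
    ∃ u > 0, 3 - 4 * exp (-u) + exp (-(q * u)) < 0 := by
  have hq0 : 0 < q := by linarith
  -- With `e^{-u} > 1 - u` and `e^{-qu} < 1 / (1 + qu)`, any `u < (q - 4) / (4q)` works.
  set u := (q - 4) / (8 * q) with hu
  have hu0 : 0 < u := div_pos (by linarith) (by positivity)
  refine ⟨u, hu0, ?_⟩
  have h1 : 1 - u < exp (-u) := by linarith [add_one_lt_exp (neg_ne_zero.2 hu0.ne')]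
  have h2 : (1 + q * u) * exp (-(q * u)) < 1 := by
    rw [exp_neg, ← div_eq_mul_inv, div_lt_one (exp_pos _)]
    linarith [add_one_lt_exp (mul_pos hq0 hu0).ne']
  have h3 : 1 < (1 + q * u) * (1 - 4 * u) := by
    rw [hu]
    field_simp
    nlinarith
  have h4 : exp (-(q * u)) < 1 - 4 * u :=
    lt_of_mul_lt_mul_left (h2.trans h3) (by positivity)
  linarith

lemma exists_genGaussian_combination_neg {p : ℝ} (hp : 2 < p) :
    ∃ s, 3 * genGaussian p 0 - 4 * genGaussian p s + genGaussian p (2 * s) < 0 := by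
  have hp0 : 0 < p := by linarith
  have hq : 4 < (2 : ℝ) ^ p := by
    simpa [show (2 : ℝ) ^ (2 : ℝ) = 4 by norm_num]
      using rpow_lt_rpow_of_exponent_lt one_lt_two hp
  obtain ⟨u, hu, h⟩ := exists_three_sub_four_mul_exp_add_exp_neg hq
  set s := (p * u) ^ p⁻¹
  have hs : 0 ≤ s := by positivity
  have hsp : s ^ p = p * u := by
    rw [← rpow_mul (by positivity), inv_mul_cancel₀ hp0.ne', rpow_one]
  refine ⟨s, ?_⟩
  rw [genGaussian_zero hp0, genGaussian_of_nonneg p hs, genGaussian_of_nonneg p (by positivity),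
    mul_rpow zero_le_two hs, hsp]
  convert h using 4 <;> field_simp

lemma re_G_zero_I_mul {β : ℝ} (hβ : -1 < β) (t : ℝ) :
    (G β 0 (Complex.I * t)).re = ∫ y in Ioi 0, exp (-y ^ (β + 1) / (β + 1)) * cos (t * y) := by
  have hp : 0 < β + 1 := by linarith
  have hf : IntegrableOn (fun y => exp (-y ^ (β + 1) / (β + 1))) (Ioi 0) :=
    (integrable_genGaussian hp).integrableOn.congr_fun
      (fun y hy => genGaussian_of_nonneg _ (le_of_lt hy)) measurableSet_Ioi
  have hint : IntegrableOn (fun z : ℝ => ((exp (-z ^ (β + 1) / (β + 1)) : ℝ) : ℂ)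
      * Complex.exp (-(Complex.I * t) * z)) (Ioi 0) :=
    hf.ofReal.mul_bdd (c := 1) (by fun_prop) (ae_of_all _ fun z => by simp [Complex.norm_exp])
  simp only [G, rpow_zero, one_mul]
  rw [← RCLike.re_to_complex, ← integral_re hint]
  refine setIntegral_congr_fun measurableSet_Ioi fun z _ => ?_
  rw [RCLike.re_to_complex, Complex.re_ofReal_mul, Complex.exp_re]
  simp

/-- For `β > 1`, there exists `t > 0` with
`Re G_{β,0}(it) = ∫₀^∞ exp(−y^{β+1}/(β+1)) cos(ty) dy = 0`. -/
theorem stmt13 (β : ℝ) (hβ : 1 < β) :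
    ∃ t : ℝ, 0 < t ∧
      (G β 0 (Complex.I * (t : ℂ))).re = 0 ∧
      (G β 0 (Complex.I * (t : ℂ))).re
        = ∫ y in Set.Ioi (0 : ℝ),
            Real.exp (-y ^ (β + 1) / (β + 1)) * Real.cos (t * y) := by
  have hp : 0 < β + 1 := by linarith
  obtain ⟨s, hs⟩ := exists_genGaussian_combination_neg (show 2 < β + 1 by linarith)
  obtain ⟨t, ht, hzero⟩ := exists_pos_cosTransform_eq_zero (continuous_genGaussian hp)
    (integrable_genGaussian hp) (norm_genGaussian_le_one hp) (genGaussian_neg _)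
    (integral_genGaussian_pos hp) hs
  have hre := re_G_zero_I_mul (show -1 < β by linarith) t
  rw [cosTransform_genGaussian, mul_eq_zero, ← hre] at hzero
  exact ⟨t, ht, hzero.resolve_left two_ne_zero, hre⟩
end
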